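/- For every H in the closed positive Weyl chamber of a reduced root system with positive roots Σ⁺, the product ∏_{α∈Σ⁺} (sinh⟨α,H⟩)² is comparable (with constants independent of H) to ( ∏_{α∈Σ⁺} ⟨α,H⟩/(1+⟨α,H⟩) )² · e^{⟨2ρ,H⟩}, where ρ = Σ_{α∈Σ⁺} α. -/

import Mathlib

/-!
Writing `sinh x = eˣ (1 - e^{-2x}) / 2`, everything reduces to the one-variable estimate
`x/(1+x) ≤ 1 - e^{-2x} ≤ 3x/(1+x)` for `x ≥ 0`, which makes `sinh² x` comparable to
`(x/(1+x))² e^{2x}` with constants `1/4` and `9/4`. Multiplying over `Σ⁺` turns the product of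
the exponentials into `e^{⟨2ρ,H⟩}` and the constants into their `|Σ⁺|`-th powers.
-/

open scoped RealInnerProductSpace

namespace Real

theorem sinh_eq_exp_mul_one_sub_exp_neg_two_mul (x : ℝ) :
    sinh x = exp x * (1 - exp (-2 * x)) / 2 := by
  rw [sinh_eq, mul_sub, mul_one, ← exp_add]
  ring_nf

theorem div_one_add_le_one_sub_exp_neg_two_mul {x : ℝ} (hx : 0 ≤ x) :
    x / (1 + x) ≤ 1 - exp (-2 * x) := by
  have h1x : 0 < 1 + x := by linarith
  have hexp : 1 + x ≤ exp (2 * x) := by linarith [add_one_le_exp (2 * x)]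
  have : exp (-2 * x) ≤ 1 / (1 + x) := by
    rw [neg_mul, exp_neg, inv_eq_one_div]
    exact one_div_le_one_div_of_le h1x hexp
  calc x / (1 + x) = 1 - 1 / (1 + x) := by field_simp; ring
    _ ≤ 1 - exp (-2 * x) := by linarith

theorem one_sub_exp_neg_two_mul_le {x : ℝ} (hx : 0 ≤ x) :
    1 - exp (-2 * x) ≤ 3 * (x / (1 + x)) := by
  set t := 1 - exp (-2 * x)
  have ht_le_one : t ≤ 1 := by linarith [exp_pos (-2 * x)]
  have ht_le : t ≤ 2 * x := by linarith [add_one_le_exp (-2 * x)]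
  rw [mul_div_assoc', le_div_iff₀ (by linarith)]
  nlinarith

theorem sinh_sq_comparable {x : ℝ} (hx : 0 ≤ x) :
    1 / 4 * ((x / (1 + x)) ^ 2 * exp (2 * x)) ≤ sinh x ^ 2 ∧
      sinh x ^ 2 ≤ 9 / 4 * ((x / (1 + x)) ^ 2 * exp (2 * x)) := by
  have hsq : sinh x ^ 2 = (1 - exp (-2 * x)) ^ 2 / 4 * exp (2 * x) := by
    rw [sinh_eq_exp_mul_one_sub_exp_neg_two_mul, div_pow, mul_pow, ← exp_nat_mul]
    push_cast
    ring
  have hq : 0 ≤ x / (1 + x) := div_nonneg hx (by linarith)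
  have hlo := div_one_add_le_one_sub_exp_neg_two_mul hx
  have hhi := one_sub_exp_neg_two_mul_le hx
  have he := exp_pos (2 * x)
  rw [hsq]
  constructor
  · have := pow_le_pow_left₀ hq hlo 2
    nlinarith
  · have := pow_le_pow_left₀ (hq.trans hlo) hhi 2
    nlinarith

end Real

namespace Finset

variable {ι : Type*} {s : Finset ι} {f g : ι → ℝ} {c : ℝ}

theorem pow_card_mul_prod_le_prod (hc : 0 ≤ c) (hg : ∀ i ∈ s, 0 ≤ g i)
    (h : ∀ i ∈ s, c * g i ≤ f i) : c ^ s.card * ∏ i ∈ s, g i ≤ ∏ i ∈ s, f i := by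
  rw [← prod_const, ← prod_mul_distrib]
  exact prod_le_prod (fun i hi => mul_nonneg hc (hg i hi)) h

theorem prod_le_pow_card_mul_prod (hf : ∀ i ∈ s, 0 ≤ f i)
    (h : ∀ i ∈ s, f i ≤ c * g i) : ∏ i ∈ s, f i ≤ c ^ s.card * ∏ i ∈ s, g i := by
  rw [← prod_const, ← prod_mul_distrib]
  exact prod_le_prod hf h

end Finset

theorem inner_two_smul_sum_left {𝔞 : Type*} [NormedAddCommGroup 𝔞] [InnerProductSpace ℝ 𝔞]
    (S : Finset 𝔞) (H : 𝔞) : ⟪2 • ∑ α ∈ S, α, H⟫ = ∑ α ∈ S, 2 * ⟪α, H⟫ := by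
  rw [two_smul, inner_add_left, sum_inner, ← Finset.sum_add_distrib]
  simp only [two_mul]

theorem cartan_density_comparable_general
    {𝔞 : Type*} [NormedAddCommGroup 𝔞] [InnerProductSpace ℝ 𝔞]
    (S : Finset 𝔞) :
    ∃ c₁ c₂ : ℝ, 0 < c₁ ∧ c₁ ≤ c₂ ∧
      ∀ H : 𝔞, (∀ α ∈ S, 0 ≤ ⟪α, H⟫) →
        c₁ * ((∏ α ∈ S, ⟪α, H⟫ / (1 + ⟪α, H⟫)) ^ 2
            * Real.exp ⟪2 • (∑ α ∈ S, α), H⟫)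
          ≤ ∏ α ∈ S, (Real.sinh ⟪α, H⟫) ^ 2 ∧
        ∏ α ∈ S, (Real.sinh ⟪α, H⟫) ^ 2
          ≤ c₂ * ((∏ α ∈ S, ⟪α, H⟫ / (1 + ⟪α, H⟫)) ^ 2
            * Real.exp ⟪2 • (∑ α ∈ S, α), H⟫) := by
  refine ⟨(1 / 4) ^ S.card, (9 / 4) ^ S.card, by positivity,
    pow_le_pow_left₀ (by norm_num) (by norm_num) _, fun H hH => ?_⟩
  have hfactor : (∏ α ∈ S, ⟪α, H⟫ / (1 + ⟪α, H⟫)) ^ 2 * Real.exp ⟪2 • ∑ α ∈ S, α, H⟫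
      = ∏ α ∈ S, (⟪α, H⟫ / (1 + ⟪α, H⟫)) ^ 2 * Real.exp (2 * ⟪α, H⟫) := by
    rw [inner_two_smul_sum_left, Real.exp_sum, ← Finset.prod_pow, ← Finset.prod_mul_distrib]
  rw [hfactor]
  constructor
  · exact Finset.pow_card_mul_prod_le_prod (by norm_num) (fun α _ => by positivity)
      (fun α hα => (Real.sinh_sq_comparable (hH α hα)).1)
  · exact Finset.prod_le_pow_card_mul_prod (fun α _ => sq_nonneg _)
      (fun α hα => (Real.sinh_sq_comparable (hH α hα)).2)

/-- The Cartan density `∏_{α∈Σ⁺} (sinh⟨α,H⟩)²` is comparable on the closed positive Weyl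
chamber to `(∏_{α∈Σ⁺} ⟨α,H⟩/(1+⟨α,H⟩))² e^{⟨2ρ,H⟩}`, where `ρ = Σ_{α∈Σ⁺} α`. -/
theorem cartan_density_comparable
    {𝔞 : Type*} [NormedAddCommGroup 𝔞] [InnerProductSpace ℝ 𝔞] [FiniteDimensional ℝ 𝔞]
    (S : Finset 𝔞) (hS : (0 : 𝔞) ∉ S) :
    ∃ c₁ c₂ : ℝ, 0 < c₁ ∧ c₁ ≤ c₂ ∧
      ∀ H : 𝔞, (∀ α ∈ S, 0 ≤ ⟪α, H⟫) →
        c₁ * ((∏ α ∈ S, ⟪α, H⟫ / (1 + ⟪α, H⟫)) ^ 2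
            * Real.exp ⟪2 • (∑ α ∈ S, α), H⟫)
          ≤ ∏ α ∈ S, (Real.sinh ⟪α, H⟫) ^ 2 ∧
        ∏ α ∈ S, (Real.sinh ⟪α, H⟫) ^ 2
          ≤ c₂ * ((∏ α ∈ S, ⟪α, H⟫ / (1 + ⟪α, H⟫)) ^ 2
            * Real.exp ⟪2 • (∑ α ∈ S, α), H⟫) :=
  cartan_density_comparable_general S
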